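/- arXiv:1812.00338 — 2 statements merged into one kernel-verified Lean document; each statement's English description precedes it below -/
import Mathlib

section
/- The Wasserstein mean of the average measure gives a lower bound for the barycenter objective: if ν_m minimizes W₂²(ν, Σᵢ λᵢ μᵢ) over probability measures ν supported on at most k points, and ν_b minimizes Σᵢ λᵢ W₂²(ν, μᵢ) over measures with at most k support points, then W₂²(ν_m, Σᵢ λᵢ μᵢ) ≤ Σᵢ λᵢ W₂²(ν_b, μᵢ). -/
open MeasureTheory ENNReal

/-- Squared 2-Wasserstein "distance": infimum over couplings of the integral of
the squared distance. -/
noncomputable def W2sq {M : Type*} [MeasurableSpace M] [PseudoMetricSpace M]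
    (μ ν : Measure M) : ℝ≥0∞ :=
  ⨅ (π : Measure (M × M)) (_ : π.map Prod.fst = μ ∧ π.map Prod.snd = ν),
    ∫⁻ p, ENNReal.ofReal (dist p.1 p.2 ^ 2) ∂π

/-- A measure supported on at most `k` points. -/
def SupportedOnAtMost {M : Type*} [MeasurableSpace M] (ν : Measure M) (k : ℕ) : Prop :=
  ∃ s : Finset M, s.card ≤ k ∧ ν (↑s : Set M)ᶜ = 0

lemma map_finset_sum_aux {M : Type*} [MeasurableSpace M] {N : ℕ}
    (l : Fin N → ℝ≥0∞) (π : Fin N → Measure (M × M)) {f : M × M → M}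
    (hf : Measurable f) :
    (∑ i, l i • π i).map f = ∑ i, l i • (π i).map f := by
  induction (Finset.univ : Finset (Fin N)) using Finset.induction with
  | empty => simp
  | @insert a s h ih =>
      rw [Finset.sum_insert h, Finset.sum_insert h, Measure.map_add _ _ hf,
        Measure.map_smul, ih]

/-- Cost of any coupling which is a probability measure is bounded. -/
lemma W2sq_ne_top {M : Type*} [MetricSpace M] [CompactSpace M]
    [MeasurableSpace M] [BorelSpace M] (μ ν : Measure M)
    [IsProbabilityMeasure μ] [IsProbabilityMeasure ν] :
    W2sq μ ν ≠ ⊤ := by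
  have hprod : (μ.prod ν).map Prod.fst = μ ∧ (μ.prod ν).map Prod.snd = ν :=
    ⟨Measure.map_fst_prod.trans (by simp), Measure.map_snd_prod.trans (by simp)⟩
  have hle : W2sq μ ν ≤ ∫⁻ p, ENNReal.ofReal (dist p.1 p.2 ^ 2) ∂(μ.prod ν) :=
    iInf_le_of_le (μ.prod ν) (iInf_le _ hprod)
  have hbound : ∫⁻ p, ENNReal.ofReal (dist p.1 p.2 ^ 2) ∂(μ.prod ν)
      ≤ ENNReal.ofReal (Metric.diam (Set.univ : Set M) ^ 2) := by
    calc ∫⁻ p, ENNReal.ofReal (dist p.1 p.2 ^ 2) ∂(μ.prod ν)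
        ≤ ∫⁻ _, ENNReal.ofReal (Metric.diam (Set.univ : Set M) ^ 2) ∂(μ.prod ν) := by
          refine lintegral_mono fun p => ENNReal.ofReal_le_ofReal ?_
          have := Metric.dist_le_diam_of_mem (isCompact_univ.isBounded)
            (Set.mem_univ p.1) (Set.mem_univ p.2)
          exact pow_le_pow_left₀ dist_nonneg this 2
      _ = ENNReal.ofReal (Metric.diam (Set.univ : Set M) ^ 2) := by simp
  exact ne_top_of_le_ne_top (by simp) (hle.trans hbound)

/-- The Wasserstein mean of the average measure induces a lower bound of the
average Wasserstein distance from the barycenter to the measures. -/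
theorem w2sq_mean_le_barycenter_objective {M : Type*} [MetricSpace M] [CompactSpace M]
    [MeasurableSpace M] [BorelSpace M] (N k : ℕ)
    (μ : Fin N → Measure M) (hμ : ∀ i, IsProbabilityMeasure (μ i))
    (l : Fin N → ℝ≥0∞) (hl : ∑ i, l i = 1)
    (νm νb : Measure M)
    (hνm : IsProbabilityMeasure νm) (hνb : IsProbabilityMeasure νb)
    (hνmk : SupportedOnAtMost νm k) (hνbk : SupportedOnAtMost νb k)
    (hmin : ∀ ν : Measure M, IsProbabilityMeasure ν → SupportedOnAtMost ν k →
      W2sq νm (∑ i, l i • μ i) ≤ W2sq ν (∑ i, l i • μ i)) :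
    W2sq νm (∑ i, l i • μ i) ≤ ∑ i, l i * W2sq νb (μ i) := by
  have key : W2sq νb (∑ i, l i • μ i) ≤ ∑ i, l i * W2sq νb (μ i) := by
    refine ENNReal.le_of_forall_pos_le_add fun ε hε hfin => ?_
    -- choose near-optimal couplings
    have hch : ∀ i : Fin N, ∃ π : Measure (M × M),
        (π.map Prod.fst = νb ∧ π.map Prod.snd = μ i) ∧
        ∫⁻ p, ENNReal.ofReal (dist p.1 p.2 ^ 2) ∂π < W2sq νb (μ i) + ε := by
      intro i
      have := hμ i
      have hne : W2sq νb (μ i) ≠ ⊤ := W2sq_ne_top _ _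
      have hlt : W2sq νb (μ i) < W2sq νb (μ i) + ε :=
        ENNReal.lt_add_right hne (by exact_mod_cast hε.ne')
      rw [W2sq] at hlt
      simpa [iInf_lt_iff, and_comm, W2sq] using hlt
    choose π hπ hπcost using hch
    -- the mixture coupling
    have hc1 : (∑ i, l i • π i).map Prod.fst = νb := by
      rw [map_finset_sum_aux l π measurable_fst]
      simp only [fun i => (hπ i).1, ← Finset.sum_smul, hl, one_smul]
    have hc2 : (∑ i, l i • π i).map Prod.snd = ∑ i, l i • μ i := by
      rw [map_finset_sum_aux l π measurable_snd]
      exact Finset.sum_congr rfl fun i _ => by rw [(hπ i).2]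
    have hle : W2sq νb (∑ i, l i • μ i)
        ≤ ∫⁻ p, ENNReal.ofReal (dist p.1 p.2 ^ 2) ∂(∑ i, l i • π i) :=
      iInf_le_of_le (∑ i, l i • π i) (iInf_le _ ⟨hc1, hc2⟩)
    rw [MeasureTheory.lintegral_finset_sum_measure] at hle
    simp only [lintegral_smul_measure] at hle
    calc W2sq νb (∑ i, l i • μ i)
        ≤ ∑ i, l i * ∫⁻ p, ENNReal.ofReal (dist p.1 p.2 ^ 2) ∂(π i) := hle
      _ ≤ ∑ i, l i * (W2sq νb (μ i) + ε) := by
          exact Finset.sum_le_sum fun i _ =>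
            mul_le_mul_right (hπcost i).le _
      _ = ∑ i, l i * W2sq νb (μ i) + ∑ i, l i * ε := by
          rw [← Finset.sum_add_distrib]
          exact Finset.sum_congr rfl fun i _ => mul_add _ _ _
      _ = ∑ i, l i * W2sq νb (μ i) + ε := by rw [← Finset.sum_mul, hl, one_mul]
  exact (hmin νb hνb hνbk).trans key
end

section
/- The variational OT energy E(h) = ∫_Ω θ_h(x) dμ(x) − Σⱼ ν_j h_j is a convex function of h ∈ ℝᵏ, and its partial derivative with respect to h_j equals μ(Ω ∩ S_j(h)) − ν_j (wherever the cell boundaries are μ-null). Consequently, h is a critical point of E if and only if each cell S_j(h) carries exactly mass ν_j. -/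
open MeasureTheory
open scoped RealInnerProductSpace

/-- `θ_h(x) = maxⱼ {⟨x, y_j⟩ + h_j}`. -/
noncomputable def thetaH {n k : ℕ} (y : Fin (k + 1) → EuclideanSpace ℝ (Fin n))
    (h : Fin (k + 1) → ℝ) (x : EuclideanSpace ℝ (Fin n)) : ℝ :=
  Finset.univ.sup' Finset.univ_nonempty (fun j => ⟪x, y j⟫ + h j)

/-- The power cell where index `j` attains the maximum. -/
def powerCell {n k : ℕ} (y : Fin (k + 1) → EuclideanSpace ℝ (Fin n))
    (h : Fin (k + 1) → ℝ) (j : Fin (k + 1)) : Set (EuclideanSpace ℝ (Fin n)) :=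
  {x | ∀ i, ⟪x, y i⟫ + h i ≤ ⟪x, y j⟫ + h j}

lemma thetaH_le {n k : ℕ} {y : Fin (k + 1) → EuclideanSpace ℝ (Fin n)}
    {h : Fin (k + 1) → ℝ} {x : EuclideanSpace ℝ (Fin n)} {c : ℝ}
    (hc : ∀ i, ⟪x, y i⟫ + h i ≤ c) : thetaH y h x ≤ c :=
  Finset.sup'_le _ _ fun i _ => hc i

lemma le_thetaH {n k : ℕ} (y : Fin (k + 1) → EuclideanSpace ℝ (Fin n))
    (h : Fin (k + 1) → ℝ) (x : EuclideanSpace ℝ (Fin n)) (i : Fin (k + 1)) :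
    ⟪x, y i⟫ + h i ≤ thetaH y h x :=
  Finset.le_sup' (fun i => ⟪x, y i⟫ + h i) (Finset.mem_univ i)

lemma thetaH_continuous {n k : ℕ} (y : Fin (k + 1) → EuclideanSpace ℝ (Fin n))
    (h : Fin (k + 1) → ℝ) : Continuous (thetaH y h) :=
  Continuous.finset_sup'_apply Finset.univ_nonempty
    (fun i _ => ((continuous_id.inner continuous_const)).add continuous_const)

lemma powerCell_measurable {n k : ℕ} (y : Fin (k + 1) → EuclideanSpace ℝ (Fin n))
    (h : Fin (k + 1) → ℝ) (j : Fin (k + 1)) : MeasurableSet (powerCell y h j) := by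
  have : powerCell y h j = ⋂ i, {x | ⟪x, y i⟫ + h i ≤ ⟪x, y j⟫ + h j} := by
    ext x; simp [powerCell, Set.mem_iInter]
  rw [this]
  exact MeasurableSet.iInter fun i =>
    (isClosed_le (((continuous_id.inner continuous_const)).add continuous_const)
      (((continuous_id.inner continuous_const)).add continuous_const)).measurableSet

lemma thetaH_lip {n k : ℕ} (y : Fin (k + 1) → EuclideanSpace ℝ (Fin n))
    (h : Fin (k + 1) → ℝ) (j : Fin (k + 1)) (x : EuclideanSpace ℝ (Fin n)) :
    LipschitzWith 1 (fun t => thetaH y (Function.update h j t) x) := by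
  apply LipschitzWith.of_dist_le_mul
  intro t s
  rw [Real.dist_eq, Real.dist_eq, NNReal.coe_one, one_mul]
  have key : ∀ t s : ℝ, thetaH y (Function.update h j t) x ≤
      thetaH y (Function.update h j s) x + |t - s| := by
    intro t s
    apply thetaH_le
    intro i
    have h1 : Function.update h j t i ≤ Function.update h j s i + |t - s| := by
      rcases eq_or_ne i j with rfl | hij
      · simp [abs_sub_comm]
        nlinarith [le_abs_self (t - s), abs_nonneg (t - s), le_abs_self (s - t)]
      · simp [Function.update_of_ne hij, abs_nonneg (t - s)]
    calc ⟪x, y i⟫ + Function.update h j t i ≤ (⟪x, y i⟫ + Function.update h j s i) + |t - s| :=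
          by linarith
      _ ≤ thetaH y (Function.update h j s) x + |t - s| := by
          have := le_thetaH y (Function.update h j s) x i; linarith
  rw [abs_sub_le_iff]
  constructor
  · have := key t s; linarith
  · have := key s t; rw [abs_sub_comm] at this; linarith

lemma thetaH_hasDerivAt {n k : ℕ} (y : Fin (k + 1) → EuclideanSpace ℝ (Fin n))
    (h : Fin (k + 1) → ℝ) (j : Fin (k + 1)) (x : EuclideanSpace ℝ (Fin n))
    (hx : ∀ i, i ≠ j → ⟪x, y i⟫ + h i ≠ ⟪x, y j⟫ + h j) :
    HasDerivAt (fun t => thetaH y (Function.update h j t) x)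
      (Set.indicator (powerCell y h j) (fun _ => (1:ℝ)) x) (h j) := by
  by_cases hmem : x ∈ powerCell y h j
  · -- strict max at j; locally θ = ⟪x, y j⟫ + t
    rw [Set.indicator_of_mem hmem]
    have hev : (fun t => thetaH y (Function.update h j t) x) =ᶠ[nhds (h j)]
        fun t => ⟪x, y j⟫ + t := by
      have hstrict : ∀ i, i ≠ j → ⟪x, y i⟫ + h i < ⟪x, y j⟫ + h j := fun i hij =>
        lt_of_le_of_ne (hmem i) (hx i hij)
      have : ∀ᶠ t in nhds (h j), ∀ i, i ≠ j → ⟪x, y i⟫ + h i ≤ ⟪x, y j⟫ + t := by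
        rw [Filter.eventually_all]
        intro i
        rcases eq_or_ne i j with rfl | hij
        · simp
        · have : ∀ᶠ t in nhds (h j), ⟪x, y i⟫ + h i < ⟪x, y j⟫ + t := by
            have hc : Continuous fun t : ℝ => ⟪x, y j⟫ + t := continuous_const.add continuous_id
            have := (hc.tendsto (h j)).eventually (eventually_gt_nhds (hstrict i hij))
            exact this
          filter_upwards [this] with t ht _ using ht.le
      filter_upwards [this] with t ht
      apply le_antisymm
      · apply thetaH_le
        intro i
        rcases eq_or_ne i j with rfl | hij
        · simp
        · rw [Function.update_of_ne hij]; exact ht i hij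
      · have := le_thetaH y (Function.update h j t) x j
        simpa using this
    exact HasDerivAt.congr_of_eventuallyEq ((hasDerivAt_id (h j)).const_add ⟪x, y j⟫) hev
  · -- some i beats j strictly; locally θ is constant
    rw [Set.indicator_of_notMem hmem]
    obtain ⟨i₀, hi₀⟩ : ∃ i, ⟪x, y j⟫ + h j < ⟪x, y i⟫ + h i := by
      by_contra hcon
      push_neg at hcon
      exact hmem fun i => hcon i
    set c := thetaH y h x with hc
    have hjc : ⟪x, y j⟫ + h j < c := lt_of_lt_of_le hi₀ (le_thetaH y h x i₀)
    obtain ⟨i₁, _, hi₁⟩ := Finset.exists_mem_eq_sup' (Finset.univ_nonempty)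
      (fun i => ⟪x, y i⟫ + h i)
    have hi₁c : c = ⟪x, y i₁⟫ + h i₁ := hi₁
    have hi₁j : i₁ ≠ j := by
      intro hEq; rw [hEq] at hi₁c; linarith
    have hev : (fun t => thetaH y (Function.update h j t) x) =ᶠ[nhds (h j)]
        fun _ => c := by
      have : ∀ᶠ t in nhds (h j), ⟪x, y j⟫ + t < c := by
        have hcont : Continuous fun t : ℝ => ⟪x, y j⟫ + t := continuous_const.add continuous_id
        exact (hcont.tendsto (h j)).eventually (eventually_lt_nhds hjc)
      filter_upwards [this] with t ht
      apply le_antisymm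
      · apply thetaH_le
        intro i
        rcases eq_or_ne i j with rfl | hij
        · simpa using ht.le
        · rw [Function.update_of_ne hij]; exact le_thetaH y h x i
      · have := le_thetaH y (Function.update h j t) x i₁
        rw [Function.update_of_ne hi₁j] at this
        rw [hi₁c]; exact this
    exact HasDerivAt.congr_of_eventuallyEq (hasDerivAt_const (h j) c) hev

lemma thetaH_convex_pt {n k : ℕ} (y : Fin (k + 1) → EuclideanSpace ℝ (Fin n))
    (x : EuclideanSpace ℝ (Fin n)) (p q : Fin (k + 1) → ℝ) {a b : ℝ}
    (ha : 0 ≤ a) (hb : 0 ≤ b) (hab : a + b = 1) :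
    thetaH y (a • p + b • q) x ≤ a * thetaH y p x + b * thetaH y q x := by
  apply thetaH_le
  intro i
  have h1 : ⟪x, y i⟫ + (a • p + b • q) i
      = a * (⟪x, y i⟫ + p i) + b * (⟪x, y i⟫ + q i) := by
    simp only [Pi.add_apply, Pi.smul_apply, smul_eq_mul]
    linear_combination (-⟪x, y i⟫) * hab
  rw [h1]
  gcongr
  · exact le_thetaH y p x i
  · exact le_thetaH y q x i

/-- The variational OT energy `E(h) = ∫_Ω θ_h dμ − Σⱼ ν_j h_j` is convex in `h`,
its partial derivative in `h_j` is `μ(Ω ∩ S_j(h)) − ν_j` (when cell boundaries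
are `μ`-null), and hence `h` is a critical point iff each cell carries exactly
mass `ν_j`. -/
theorem vot_energy_convex_and_deriv (n k : ℕ)
    (y : Fin (k + 1) → EuclideanSpace ℝ (Fin n)) (hy : Function.Injective y)
    (Ω : Set (EuclideanSpace ℝ (Fin n))) (hΩ : IsCompact Ω)
    (μ : Measure (EuclideanSpace ℝ (Fin n))) [IsProbabilityMeasure μ]
    (hac : μ ≪ volume)
    (ν : Fin (k + 1) → ℝ) (hν : ∀ j, 0 < ν j) (hsum : ∑ j, ν j = (μ Ω).toReal)
    (hint : ∀ h' : Fin (k + 1) → ℝ, IntegrableOn (thetaH y h') Ω μ)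
    (h : Fin (k + 1) → ℝ)
    (hnull : ∀ i j, i ≠ j → μ {x | ⟪x, y i⟫ + h i = ⟪x, y j⟫ + h j} = 0) :
    ConvexOn ℝ Set.univ
        (fun h' : Fin (k + 1) → ℝ =>
          (∫ x in Ω, thetaH y h' x ∂μ) - ∑ j, ν j * h' j) ∧
      (∀ j : Fin (k + 1),
        HasDerivAt
          (fun t : ℝ =>
            (∫ x in Ω, thetaH y (Function.update h j t) x ∂μ) -
              ∑ i, ν i * Function.update h j t i)
          ((μ (Ω ∩ powerCell y h j)).toReal - ν j) (h j)) ∧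
      ((∀ j, (μ (Ω ∩ powerCell y h j)).toReal - ν j = 0) ↔
        ∀ j, (μ (Ω ∩ powerCell y h j)).toReal = ν j) := by
  refine ⟨?_, ?_, by simp [sub_eq_zero]⟩
  · -- Convexity
    refine ⟨convex_univ, ?_⟩
    intro p _ q _ a b ha hb hab
    simp only [smul_eq_mul]
    have hlin : ∑ j, ν j * (a • p + b • q) j = a * (∑ j, ν j * p j) + b * (∑ j, ν j * q j) := by
      rw [Finset.mul_sum, Finset.mul_sum, ← Finset.sum_add_distrib]
      apply Finset.sum_congr rfl
      intro i _
      simp only [Pi.add_apply, Pi.smul_apply, smul_eq_mul]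
      ring
    have hintgr : (∫ x in Ω, thetaH y (a • p + b • q) x ∂μ)
        ≤ a * (∫ x in Ω, thetaH y p x ∂μ) + b * (∫ x in Ω, thetaH y q x ∂μ) := by
      rw [← integral_const_mul, ← integral_const_mul,
        ← integral_add ((hint p).const_mul a) ((hint q).const_mul b)]
      apply integral_mono (hint _) (((hint p).const_mul a).add ((hint q).const_mul b))
      intro x
      simpa using thetaH_convex_pt y x p q ha hb hab
    rw [hlin]
    linarith [hintgr]
  · -- Derivative
    intro j
    -- derivative of the linear part
    have hlin : HasDerivAt (fun t : ℝ => ∑ i, ν i * Function.update h j t i) (ν j) (h j) := by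
      have : ∀ t, ∑ i, ν i * Function.update h j t i
          = ν j * t + ∑ i ∈ Finset.univ.erase j, ν i * h i := by
        intro t
        rw [← Finset.add_sum_erase _ _ (Finset.mem_univ j)]
        simp only [Function.update_self]
        congr 1
        apply Finset.sum_congr rfl
        intro i hi
        rw [Function.update_of_ne (Finset.ne_of_mem_erase hi)]
      simp only [this]
      simpa using ((hasDerivAt_id (h j)).const_mul (ν j)).add_const (∑ i ∈ Finset.univ.erase j, ν i * h i)
    -- derivative of the integral part
    have hmeasS := powerCell_measurable y h j
    set F' : EuclideanSpace ℝ (Fin n) → ℝ :=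
      Set.indicator (powerCell y h j) (fun _ => (1:ℝ)) with hF'
    have hbad : μ {x | ∃ i, i ≠ j ∧ ⟪x, y i⟫ + h i = ⟪x, y j⟫ + h j} = 0 := by
      have : {x : EuclideanSpace ℝ (Fin n) | ∃ i, i ≠ j ∧ ⟪x, y i⟫ + h i = ⟪x, y j⟫ + h j}
          ⊆ ⋃ i ∈ {i : Fin (k+1) | i ≠ j}, {x | ⟪x, y i⟫ + h i = ⟪x, y j⟫ + h j} := by
        intro x ⟨i, hij, hEq⟩
        exact Set.mem_biUnion hij hEq
      refine measure_mono_null this ?_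
      refine (measure_biUnion_null_iff (Set.countable_univ.mono (Set.subset_univ _))).2 ?_
      intro i hi
      exact hnull i j hi
    have hdiff : ∀ᵐ x ∂(μ.restrict Ω),
        HasDerivAt (fun t => thetaH y (Function.update h j t) x) (F' x) (h j) := by
      have h0 : (μ.restrict Ω) {x | ∃ i, i ≠ j ∧ ⟪x, y i⟫ + h i = ⟪x, y j⟫ + h j} = 0 :=
        le_antisymm (hbad ▸ Measure.restrict_apply_le _ _) zero_le
      have hae : ∀ᵐ x ∂(μ.restrict Ω), ∀ i, i ≠ j → ⟪x, y i⟫ + h i ≠ ⟪x, y j⟫ + h j := by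
        rw [MeasureTheory.ae_iff]
        convert h0 using 2
        ext x
        push_neg
        simp
      filter_upwards [hae] with x hx
      exact thetaH_hasDerivAt y h j x hx
    have hmain := hasDerivAt_integral_of_dominated_loc_of_lip
      (F := fun t x => thetaH y (Function.update h j t) x) (F' := F')
      (x₀ := h j) (bound := fun _ => (1:ℝ)) (μ := μ.restrict Ω) (Metric.ball_mem_nhds (h j) one_pos)
      (Filter.Eventually.of_forall fun t =>
        (thetaH_continuous y (Function.update h j t)).aestronglyMeasurable)
      (by simpa [Function.update_eq_self, IntegrableOn] using hint h)
      ((measurable_const.indicator hmeasS).aestronglyMeasurable)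
      (Filter.Eventually.of_forall fun x => by
        have := (thetaH_lip y h j x).lipschitzOnWith (s := Metric.ball (h j) 1)
        convert this using 2
        simp)
      (integrable_const 1)
      hdiff
    have hval : (∫ x, F' x ∂(μ.restrict Ω)) = (μ (Ω ∩ powerCell y h j)).toReal := by
      have hv := integral_indicator_one (μ := μ.restrict Ω) hmeasS
      rw [measureReal_def, Measure.restrict_apply hmeasS, Set.inter_comm] at hv
      exact hv
    rw [hval] at hmain
    exact hmain.2.sub hlin
end
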